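/- Let 𝒢 be a temporal graph with vertex set V, lifetime Λ, snapshots G_t, VIM sequence (F_t) and active sets (A_t), with the conventions F_0 = F_1 and A_0 = A_1. Let X be a label set, k ≥ 0 an integer, U ∈ X a fixed label, S_0 a set of (k,X)-states on V, and Tr a predicate on triples consisting of two (k,X)-states and a static graph on V. Assume: (L1) every state in S_0 gives label U to every vertex not in A_0; and (L2) for all states s, s' and every static graph G on V, if Tr(s, s', G) holds then s and s' give the same label to every isolated vertex of G. If s_0, …, s_t is a sequence of (k,X)-states with s_0 ∈ S_0 and Tr(s_{i−1}, s_i, G_i) holding for all 1 ≤ i ≤ t, then s_t gives label U to every vertex in (⋃_{t' > t} F_{t'}) \ F_t. -/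

import Mathlib

variable {V : Type} [Fintype V] [DecidableEq V]

/-- The snapshot of a temporal graph `(G, lam)` at time `t`: the static graph on `V`
whose edges are the edges of `G` active at time `t`. -/
def snapshot (G : SimpleGraph V) (lam : Sym2 V → Finset ℕ) (t : ℕ) : SimpleGraph V where
  Adj u v := G.Adj u v ∧ t ∈ lam s(u, v)
  symm := by
    refine ⟨?_⟩
    rintro u v ⟨h1, h2⟩
    exact ⟨h1.symm, by rwa [Sym2.eq_swap]⟩
  loopless := ⟨fun v h => G.irrefl h.1⟩

/-- The bag `F_t` of the VIM sequence: vertices `v` with edges `vu`, `vw` such that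
`min λ(vu) ≤ t ≤ max λ(vw)`. -/
def vimBag (G : SimpleGraph V) (lam : Sym2 V → Finset ℕ) (t : ℕ) : Set V :=
  {v | ∃ u w, G.Adj v u ∧ G.Adj v w ∧
    (∃ t1 ∈ lam s(v, u), t1 ≤ t) ∧ (∃ t2 ∈ lam s(v, w), t ≤ t2)}

/-- The set `A_t` of vertices having an incident edge active at time `t`. -/
def activeSet (G : SimpleGraph V) (lam : Sym2 V → Finset ℕ) (t : ℕ) : Set V :=
  {v | ∃ u, G.Adj v u ∧ t ∈ lam s(v, u)}

/-- A `(k, X)`-state on `V`: a labelling of the vertices by `X` together with a vector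
of `k` integer counters. -/
abbrev KState (V X : Type) (k : ℕ) : Type := (V → X) × (Fin k → ℤ)

/-- Two states agree on `W ⊆ V` if their labellings coincide on `W` and their counter
vectors are equal. -/
def agreeOn {V X : Type} {k : ℕ} (s s' : KState V X k) (W : Set V) : Prop :=
  (∀ v ∈ W, s.1 v = s'.1 v) ∧ s.2 = s'.2

/-- Suppose every initial state gives label `U` to every vertex outside
`A_0 = A_1` (L1), and whenever `Tr s s' H` holds, `s` and `s'` give the same label to
every isolated vertex of `H` (L2). If `s 0, …, s t` is a sequence of states with
`s 0 ∈ S_0` and `Tr (s (i-1)) (s i) G_i` for `1 ≤ i ≤ t`, then `s t` gives label `U` to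
every vertex of `(⋃_{t' > t} F_{t'}) \\ F_t` (with the convention `F_0 = F_1`). -/
theorem stmt_11 (G : SimpleGraph V) (lam : Sym2 V → Finset ℕ) (Λ : ℕ)
    (hne : ∀ e ∈ G.edgeSet, (lam e).Nonempty)
    (hempty : ∀ e, e ∉ G.edgeSet → lam e = ∅)
    (hbdd : ∀ e, ∀ t ∈ lam e, 1 ≤ t ∧ t ≤ Λ)
    (hlife : ∃ e ∈ G.edgeSet, Λ ∈ lam e)
    (X : Type) (k : ℕ) (U : X) (S0 : Set (KState V X k))
    (Tr : KState V X k → KState V X k → SimpleGraph V → Prop)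
    (hL1 : ∀ s ∈ S0, ∀ v : V, v ∉ activeSet G lam 1 → s.1 v = U)
    (hL2 : ∀ (s s' : KState V X k) (H : SimpleGraph V), Tr s s' H →
      ∀ v : V, (∀ u, ¬ H.Adj v u) → s.1 v = s'.1 v)
    (t : ℕ) (s : ℕ → KState V X k)
    (hs0 : s 0 ∈ S0)
    (htr : ∀ i, 1 ≤ i → i ≤ t → Tr (s (i - 1)) (s i) (snapshot G lam i)) :
    ∀ v : V, (∃ t' > t, v ∈ vimBag G lam (max t' 1)) →
      v ∉ vimBag G lam (max t 1) → (s t).1 v = U := by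
  intro v ⟨t', ht', u, w, hu, hw, _, t2, ht2mem, ht2ge⟩ hnot
  have ht2 : max t 1 ≤ t2 := le_trans (max_le_max (le_of_lt ht') le_rfl) ht2ge
  have key : ∀ u', G.Adj v u' → ∀ τ ∈ lam s(v, u'), max t 1 < τ := by
    intro u' hadj τ hτ
    by_contra hle
    exact hnot ⟨u', w, hadj, hw, ⟨τ, hτ, by omega⟩, ⟨t2, ht2mem, ht2⟩⟩
  have main : ∀ i, i ≤ t → (s i).1 v = U := by
    intro i
    induction i with
    | zero =>
      intro _
      refine hL1 _ hs0 v ?_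
      rintro ⟨u', hadj, hmem⟩
      have := key u' hadj 1 hmem
      have : 1 ≤ max t 1 := le_max_right _ _
      omega
    | succ i ih =>
      intro h
      have hiso : ∀ u', ¬ (snapshot G lam (i + 1)).Adj v u' := by
        rintro u' ⟨hadj, hmem⟩
        have h1 := key u' hadj (i + 1) hmem
        have h2 : t ≤ max t 1 := le_max_left _ _
        omega
      have := hL2 _ _ _ (htr (i + 1) (by omega) h) v hiso
      rw [show i + 1 - 1 = i from rfl] at this
      rw [← this]
      exact ih (by omega)
  exact main t le_rfl
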